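/- arXiv:2206.11729 — 2 statements merged into one kernel-verified Lean document; each statement's English description precedes it below -/
import Mathlib

section
/- Let z_k = σ_k + i t_k for k = 1,…,r be complex numbers with 1/2 ≤ σ ≤ σ_k ≤ 1 for all k. Then for any finitely supported sequence of complex numbers (a_n), ∑_{k=1}^r |∑_n a_n n^{-σ_k - i t_k}| ≤ ∫_0^{1/2} ∑_{k=1}^r ( |∑_n 2 a_n n^{-σ - i t_k}| + |∑_n a_n n^{-σ - i t_k} (log n) n^{-α}| ) dα. -/
/-!
Write `σ_k = σ + δ_k` with `0 ≤ δ_k ≤ 1/2`. For `n ≥ 1`,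
`n^{-δ} = 1 - ∫_0^δ log n · n^{-α} dα`, so the Dirichlet polynomial at `σ_k + i t_k` equals its
value at `σ + i t_k` minus the integral over `[0, δ_k]` of the log-weighted polynomial
`∑ a_n n^{-σ - i t_k} log n · n^{-α}`. The triangle inequality and `[0, δ_k] ⊆ [0, 1/2]` give
the bound, the factor `2` paying for the length `1/2` of the interval of integration.
-/

open Complex Real

lemma continuous_log_div_rpow {x : ℝ} (hx : 0 < x) : Continuous fun α : ℝ => Real.log x / x ^ α :=
  continuous_const.div (Real.continuous_const_rpow hx.ne') fun α => (rpow_pos_of_pos hx α).ne'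

lemma integral_log_div_rpow {x : ℝ} (hx : 0 < x) (δ : ℝ) :
    ∫ α in (0 : ℝ)..δ, Real.log x / x ^ α = 1 - x ^ (-δ) := by
  have hderiv (α : ℝ) : HasDerivAt (fun α : ℝ => -x ^ (-α)) (Real.log x / x ^ α) α := by
    refine ((hasStrictDerivAt_const_rpow hx (-α)).hasDerivAt.comp α
      (hasDerivAt_neg α)).neg.congr_deriv ?_
    rw [rpow_neg hx.le]
    field_simp
  rw [intervalIntegral.integral_eq_sub_of_hasDerivAt (fun α _ => hderiv α)
    ((continuous_log_div_rpow hx).intervalIntegrable _ _)]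
  simp only [neg_zero, rpow_zero]
  ring

lemma ofReal_cpow_neg_add_ofReal {x : ℝ} (hx : 0 < x) (s : ℂ) (δ : ℝ) :
    (x : ℂ) ^ (-(s + δ)) = x ^ (-s) * ((x ^ (-δ) : ℝ) : ℂ) := by
  rw [ofReal_cpow hx.le, neg_add, cpow_add _ _ (ofReal_ne_zero.2 hx.ne'), ofReal_neg]

section DirichletPolynomial

variable (S : Finset ℕ) (a : ℕ → ℂ) (s : ℂ)

lemma continuous_sum_mul_log_div_rpow (hS : ∀ n ∈ S, 0 < n) :
    Continuous fun α : ℝ => ∑ n ∈ S, a n * (n : ℂ) ^ (-s) * ((Real.log n / (n : ℝ) ^ α : ℝ) : ℂ) :=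
  continuous_finsetSum _ fun n hn => continuous_const.mul <|
    continuous_ofReal.comp <| continuous_log_div_rpow (Nat.cast_pos.2 (hS n hn))

lemma sum_cpow_neg_add_eq_sub_integral (hS : ∀ n ∈ S, 0 < n) (δ : ℝ) :
    ∑ n ∈ S, a n * (n : ℂ) ^ (-(s + δ)) = ∑ n ∈ S, a n * (n : ℂ) ^ (-s) -
      ∫ α in (0 : ℝ)..δ, ∑ n ∈ S, a n * (n : ℂ) ^ (-s) * ((Real.log n / (n : ℝ) ^ α : ℝ) : ℂ) := by
  rw [intervalIntegral.integral_finsetSum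
      (f := fun n α => a n * (n : ℂ) ^ (-s) * ((Real.log n / (n : ℝ) ^ α : ℝ) : ℂ)) fun n hn =>
      (continuous_const.mul <| continuous_ofReal.comp <|
        continuous_log_div_rpow (Nat.cast_pos.2 (hS n hn))).intervalIntegrable _ _,
    ← Finset.sum_sub_distrib]
  refine Finset.sum_congr rfl fun n hn => ?_
  have hn : (0 : ℝ) < n := Nat.cast_pos.2 (hS n hn)
  rw [intervalIntegral.integral_const_mul, intervalIntegral.integral_ofReal,
    integral_log_div_rpow hn, ← ofReal_natCast, ofReal_cpow_neg_add_ofReal hn]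
  push_cast
  ring

lemma norm_sum_cpow_neg_add_le (hS : ∀ n ∈ S, 0 < n) {δ L : ℝ} (hδ : 0 ≤ δ) (hδL : δ ≤ L) :
    ‖∑ n ∈ S, a n * (n : ℂ) ^ (-(s + δ))‖ ≤ ‖∑ n ∈ S, a n * (n : ℂ) ^ (-s)‖ +
      ∫ α in (0 : ℝ)..L, ‖∑ n ∈ S, a n * (n : ℂ) ^ (-s) * ((Real.log n / (n : ℝ) ^ α : ℝ) : ℂ)‖ := by
  have hcont := (continuous_sum_mul_log_div_rpow S a s hS).norm
  rw [sum_cpow_neg_add_eq_sub_integral S a s hS δ]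
  refine (norm_sub_le _ _).trans (add_le_add_right ?_ _)
  exact (intervalIntegral.norm_integral_le_integral_norm hδ).trans <|
    intervalIntegral.integral_mono_interval le_rfl hδ hδL
      (Filter.Eventually.of_forall fun _ => norm_nonneg _) (hcont.intervalIntegrable _ _)

end DirichletPolynomial

/-- Replacing evaluation of a Dirichlet polynomial at points with varying real parts
`σ_k ≥ σ` by averaged evaluations on the line `Re(s) = σ`. -/
theorem dirichlet_varying_real_parts
    (r : ℕ) (σ : ℝ) (σk t : Fin r → ℝ)
    (hσ : 1 / 2 ≤ σ) (hσk : ∀ k, σ ≤ σk k) (hσk1 : ∀ k, σk k ≤ 1)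
    (S : Finset ℕ) (hS : ∀ n ∈ S, 0 < n) (a : ℕ → ℂ) :
    ∑ k : Fin r, ‖∑ n ∈ S, a n * (n : ℂ) ^ (-((σk k : ℂ) + Complex.I * t k))‖
      ≤ ∫ α in (0:ℝ)..(1/2), ∑ k : Fin r,
          (‖∑ n ∈ S, 2 * a n * (n : ℂ) ^ (-((σ : ℂ) + Complex.I * t k))‖
            + ‖∑ n ∈ S,
                a n * (n : ℂ) ^ (-((σ : ℂ) + Complex.I * t k)) *
                  ((Real.log n / (n : ℝ) ^ α : ℝ) : ℂ)‖) := by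
  have hshift (k : Fin r) : (σk k : ℂ) + I * t k = ((σ : ℂ) + I * t k) + ((σk k - σ : ℝ) : ℂ) := by
    push_cast
    ring
  have hdouble (k : Fin r) : ‖∑ n ∈ S, 2 * a n * (n : ℂ) ^ (-((σ : ℂ) + I * t k))‖ =
      2 * ‖∑ n ∈ S, a n * (n : ℂ) ^ (-((σ : ℂ) + I * t k))‖ := by
    simp only [mul_assoc, ← Finset.mul_sum, norm_mul, Complex.norm_ofNat]
  rw [intervalIntegral.integral_finsetSum fun k _ => intervalIntegrable_const.add <|
    ((continuous_sum_mul_log_div_rpow S a _ hS).norm).intervalIntegrable _ _]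
  refine Finset.sum_le_sum fun k _ => ?_
  rw [intervalIntegral.integral_add intervalIntegrable_const <|
      ((continuous_sum_mul_log_div_rpow S a _ hS).norm).intervalIntegrable _ _,
    intervalIntegral.integral_const, hdouble, smul_eq_mul, sub_zero, hshift]
  refine (norm_sum_cpow_neg_add_le S a _ hS (sub_nonneg.2 (hσk k))
    (show σk k - σ ≤ 1 / 2 by linarith [hσk1 k])).trans_eq ?_
  ring
end

section
/- Let A > 0 and k a positive integer, and set R = 12^k. There exist real numbers θ₁,…,θ_R (with repetitions allowed) such that for all t ∈ [A, 2A], |∑_{r=1}^R exp(i t θ_r)| ≤ 4^{-k} = R^{-log 4 / log 12}. -/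
open Complex Real

/-! With `c = 2π / (3A)`, the twelve frequencies `-2c, -c, -c, -c, 0, 0, 0, 0, c, c, c, 2c`
have exponential sum `2 (1 + cos tc) (1 + 2 cos tc)`, which lies in `[-1/4, 0]` whenever
`cos tc ≤ -1/2`, that is for `tc ∈ [2π/3, 4π/3]`, i.e. `t ∈ [A, 2A]`. The `12^k` sums of `k` of
these frequencies have as exponential sum the `k`-th power of this one, hence of modulus at most
`4^{-k}`. -/

def iteratedSums {m : ℕ} (θ : Fin m → ℝ) (k : ℕ) : Fin (m ^ k) → ℝ :=
  fun r => ∑ i, θ (finFunctionFinEquiv.symm r i)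

theorem sum_exp_iteratedSums {m : ℕ} (θ : Fin m → ℝ) (k : ℕ) (t : ℝ) :
    ∑ r, Complex.exp (I * t * iteratedSums θ k r) = (∑ j, Complex.exp (I * t * θ j)) ^ k := by
  rw [Fintype.sum_pow, ← finFunctionFinEquiv.sum_comp]
  simp [iteratedSums, Finset.mul_sum, ← Complex.exp_sum]

/-- With `z = exp (i t c)`, the exponential sum is `z⁻² (1 + z)² (1 + z + z²)`. -/
def bourgainFrequencies (c : ℝ) : Fin 12 → ℝ :=
  ![-(2 * c), -c, -c, -c, 0, 0, 0, 0, c, c, c, 2 * c]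

theorem sum_exp_bourgainFrequencies (c t : ℝ) :
    ∑ j, Complex.exp (I * t * bourgainFrequencies c j)
      = ((2 * (1 + Real.cos (t * c)) * (1 + 2 * Real.cos (t * c)) : ℝ) : ℂ) := by
  have hcos :
      Complex.cos (t * c) = (Complex.exp (I * t * c) + (Complex.exp (I * t * c))⁻¹) / 2 := by
    rw [Complex.cos, ← Complex.exp_neg]; ring_nf
  have h2 : Complex.exp (I * t * (2 * c)) = Complex.exp (I * t * c) ^ 2 := by
    rw [← Complex.exp_nat_mul]; ring_nf
  have hz0 := Complex.exp_ne_zero (I * t * c)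
  simp only [bourgainFrequencies, Fin.sum_univ_succ, Fin.sum_univ_zero, Matrix.cons_val_zero,
    Matrix.cons_val_succ]
  push_cast
  simp only [mul_zero, Complex.exp_zero, mul_neg, Complex.exp_neg, h2, hcos]
  field_simp
  ring

theorem cos_le_neg_half {x : ℝ} (h1 : 2 * π / 3 ≤ x) (h2 : x ≤ 4 * π / 3) :
    Real.cos x ≤ -(1 / 2) := by
  have : 1 / 2 ≤ Real.cos |x - π| := by
    rw [← Real.cos_pi_div_three]
    exact Real.cos_le_cos_of_nonneg_of_le_pi (abs_nonneg _) (by linarith [Real.pi_pos])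
      (abs_le.2 ⟨by linarith, by linarith⟩)
  rw [Real.cos_abs, Real.cos_sub_pi] at this
  linarith

theorem norm_sum_exp_bourgainFrequencies_le {c t : ℝ} (h1 : 2 * π / 3 ≤ t * c)
    (h2 : t * c ≤ 4 * π / 3) :
    ‖∑ j, Complex.exp (I * t * bourgainFrequencies c j)‖ ≤ 1 / 4 := by
  rw [sum_exp_bourgainFrequencies, Complex.norm_real, Real.norm_eq_abs, abs_le]
  have hle := cos_le_neg_half h1 h2
  have hge := Real.neg_one_le_cos (t * c)
  -- the lower bound `-1/4` is `(4 cos tc + 3)² ≥ 0`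
  constructor <;> nlinarith [sq_nonneg (4 * Real.cos (t * c) + 3)]

theorem bourgain_example_general (A : ℝ) (hA : 0 < A) (k : ℕ) :
    (∃ θ : Fin (12 ^ k) → ℝ, ∀ t ∈ Set.Icc A (2 * A),
        ‖∑ r, Complex.exp (Complex.I * t * θ r)‖ ≤ ((4:ℝ) ^ k)⁻¹)
    ∧ ((4:ℝ) ^ k)⁻¹ = ((12:ℝ) ^ k) ^ (-(Real.log 4 / Real.log 12)) := by
  set c := 2 * π / (3 * A)
  have hc : 0 ≤ c := by positivity
  have hAc : A * c = 2 * π / 3 := by simp only [c]; field_simp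
  refine ⟨⟨iteratedSums (bourgainFrequencies c) k, fun t ⟨htA, ht2A⟩ => ?_⟩, ?_⟩
  · have hbase : ‖∑ j, Complex.exp (I * t * bourgainFrequencies c j)‖ ≤ 1 / 4 :=
      norm_sum_exp_bourgainFrequencies_le (by nlinarith) (by nlinarith)
    rw [sum_exp_iteratedSums, norm_pow, ← inv_pow, ← one_div]
    exact pow_le_pow_left₀ (norm_nonneg _) hbase k
  · rw [← Real.rpow_pow_comm (by norm_num), Real.rpow_neg (by norm_num), Real.log_div_log,
      Real.rpow_logb (by norm_num) (by norm_num) (by norm_num), inv_pow]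

/-- Bourgain's example: for `R = 12^k` there are angles `θ₁,…,θ_R` whose exponential sum
is at most `4^{-k} = R^{-log 4 / log 12}` uniformly on `[A, 2A]`. -/
theorem bourgain_example (A : ℝ) (hA : 0 < A) (k : ℕ) (hk : 0 < k) :
    (∃ θ : Fin (12 ^ k) → ℝ, ∀ t ∈ Set.Icc A (2 * A),
        ‖∑ r, Complex.exp (Complex.I * t * θ r)‖ ≤ ((4:ℝ) ^ k)⁻¹)
    ∧ ((4:ℝ) ^ k)⁻¹ = ((12:ℝ) ^ k) ^ (-(Real.log 4 / Real.log 12)) :=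
  bourgain_example_general A hA k
end
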